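/- arXiv:1803.09487 — 2 statements merged into one kernel-verified Lean document; each statement's English description precedes it below -/
import Mathlib

section
/- Let w₀ ∈ ℂ with Re(w₀) < 1/2. Then for every real ω and every τ > 0 with ωτ ∉ 2πℤ, the denominator 1 - w₀ + w₀·e^{-iωτ} is nonzero, and |(e^{-iωτ} - 1)/(1 - w₀ + w₀·e^{-iωτ})| ≤ 1/(1/2 - Re(w₀)) = 2/(1 - 2·Re(w₀)). -/
theorem stmt_14 (w₀ : ℂ) (hw : w₀.re < 1/2) (ω τ : ℝ) (hτ : 0 < τ)
    (h : ¬ ∃ k : ℤ, ω * τ = 2 * Real.pi * k) :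
    1 - w₀ + w₀ * Complex.exp (-Complex.I * (ω * τ)) ≠ 0 ∧
    ‖(Complex.exp (-Complex.I * (ω * τ)) - 1) /
        (1 - w₀ + w₀ * Complex.exp (-Complex.I * (ω * τ)))‖
      ≤ 2 / (1 - 2 * w₀.re) := by
  set z := Complex.exp (-Complex.I * (ω * τ)) with hz
  have hz1 : z ≠ 1 := by
    intro hzz
    rw [hz, Complex.exp_eq_one_iff] at hzz
    obtain ⟨n, hn⟩ := hzz
    apply h
    refine ⟨-n, ?_⟩
    have him := congrArg Complex.im hn
    simp [Complex.mul_im, Complex.mul_re] at him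
    push_cast
    linarith
  have habs : Complex.normSq z = 1 := by
    have h1 : ‖z‖ = 1 := by
      rw [hz, Complex.norm_exp]
      simp
    rw [Complex.normSq_eq_norm_sq, h1]; norm_num
  have hsq : z.re ^ 2 + z.im ^ 2 = 1 := by
    have := habs
    simp [Complex.normSq_apply] at this
    nlinarith
  have hzre : z.re ≠ 1 := by
    intro hre
    apply hz1
    have him : z.im = 0 := by nlinarith
    apply Complex.ext <;> simp [hre, him]
  set u := 1 - z with hu_def
  have hu : u ≠ 0 := sub_ne_zero.mpr (Ne.symm hz1)
  have hure : u.re = 1 - z.re := by simp [hu_def]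
  have huim : u.im = -z.im := by simp [hu_def]
  have hnormsq : Complex.normSq u = 2 - 2 * z.re := by
    simp [Complex.normSq_apply, hure, huim]
    nlinarith
  have hinvre : (u⁻¹).re = 1/2 := by
    rw [Complex.inv_re, hure, hnormsq]
    have h1 : (1:ℝ) - z.re ≠ 0 := by
      intro hh; apply hzre; linarith
    rw [div_eq_iff (by intro hh; apply h1; linarith)]
    ring
  set v := u⁻¹ - w₀ with hv_def
  have hvre : v.re = 1/2 - w₀.re := by
    simp [hv_def, Complex.sub_re, hinvre]
  have hvpos : (0:ℝ) < 1/2 - w₀.re := by linarith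
  have hvabs : 1/2 - w₀.re ≤ ‖v‖ := by
    calc 1/2 - w₀.re = v.re := hvre.symm
      _ ≤ ‖v‖ := Complex.re_le_norm v
  have hv : v ≠ 0 := by
    intro hh
    rw [hh] at hvabs
    simp at hvabs
    linarith
  have hD : 1 - w₀ + w₀ * z = u * v := by
    rw [hv_def, mul_sub, mul_inv_cancel₀ hu, hu_def]
    ring
  constructor
  · rw [hD]; exact mul_ne_zero hu hv
  · rw [hD]
    have hquot : (z - 1) / (u * v) = -v⁻¹ := by
      field_simp [hu_def]
      ring
    rw [hquot, norm_neg, norm_inv]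
    have hkey : (2:ℝ) / (1 - 2 * w₀.re) = (1/2 - w₀.re)⁻¹ := by
      rw [inv_eq_one_div, div_eq_div_iff (by linarith) (by linarith)]
      ring
    rw [hkey]
    exact inv_anti₀ hvpos hvabs
end

section
/- Suppose the complex numbers v₁,…,v_N lie in the open right half plane and w₁,…,w_N ∈ ℂ, and suppose there exists a function T, analytic on the open right half plane with |T(s)| < 1 there, satisfying T(v_j) = w_j for j = 1,…,N. Then the N×N Pick matrix with entries (1 - w_j·conj(w_k))/(v_j + conj(v_k)) is positive semidefinite. -/
open Complex Metric intervalIntegral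
open scoped ComplexOrder

lemma integral_complex_ofReal_ii {a b : ℝ} {f : ℝ → ℝ} :
    (∫ x in a..b, ((f x : ℝ) : ℂ)) = ↑(∫ x in a..b, f x) :=
  RCLike.intervalIntegral_ofReal

open Complex Metric intervalIntegral

lemma conj_inv_term {r : ℝ} (hr0 : 0 < r) {c b : ℂ} (hcr : ‖c‖ = r)
    (hden : c - (r:ℂ)^2 * b ≠ 0) :
    (starRingEnd ℂ) ((1 - c * (starRingEnd ℂ) b)⁻¹) = c * (c - (r:ℂ)^2 * b)⁻¹ := by
  have hc0 : c ≠ 0 := by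
    intro h; rw [h, norm_zero] at hcr; exact hr0.ne hcr
  have hcc : (starRingEnd ℂ) c * c = (r:ℂ)^2 := by
    rw [mul_comm, Complex.mul_conj, Complex.normSq_eq_norm_sq, hcr]
    norm_cast
  have hconjc : (starRingEnd ℂ) c = (r:ℂ)^2 * c⁻¹ := by
    field_simp [← hcc]
    exact hcc
  have h2 : (1:ℂ) - (starRingEnd ℂ) c * b = (c - (r:ℂ)^2 * b) * c⁻¹ := by
    rw [hconjc]; field_simp
  rw [map_inv₀, map_sub, map_one, map_mul, Complex.conj_conj, h2, mul_inv, inv_inv]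
  ring

lemma cauchy_term {r : ℝ} (hr0 : 0 < r) (hr1 : r ≤ 1) {g : ℂ → ℂ}
    (hg : DiffContOnCl ℂ g (ball 0 r)) {b : ℂ} (hb : ‖b‖ < 1) :
    ∫ θ in (0:ℝ)..2 * Real.pi,
        g (circleMap 0 r θ) * (starRingEnd ℂ) ((1 - circleMap 0 r θ * (starRingEnd ℂ) b)⁻¹)
      = 2 * Real.pi * g ((r : ℂ) ^ 2 * b) := by
  have hrb : (r:ℝ)^2 * ‖b‖ < r := by nlinarith [norm_nonneg b, mul_pos hr0 hr0]
  have hnorm : ‖(r:ℂ)^2 * b‖ = r^2 * ‖b‖ := by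
    rw [norm_mul, norm_pow, Complex.norm_real, Real.norm_eq_abs, abs_of_pos hr0]
  have hw : ((r:ℂ)^2 * b) ∈ ball (0:ℂ) r := by
    rw [mem_ball_zero_iff, hnorm]; exact hrb
  have key := hg.circleIntegral_sub_inv_smul hw
  simp only [circleIntegral, deriv_circleMap, smul_eq_mul] at key
  have hptw : ∀ θ : ℝ,
      circleMap 0 r θ * I * ((circleMap 0 r θ - (r:ℂ)^2 * b)⁻¹ * g (circleMap 0 r θ))
      = I * (g (circleMap 0 r θ) *
          (starRingEnd ℂ) ((1 - circleMap 0 r θ * (starRingEnd ℂ) b)⁻¹)) := by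
    intro θ
    have hcr : ‖circleMap 0 r θ‖ = r := by
      rw [norm_circleMap_zero, abs_of_pos hr0]
    have hden : circleMap 0 r θ - (r:ℂ)^2 * b ≠ 0 := by
      intro h
      have : circleMap 0 r θ = (r:ℂ)^2 * b := by linear_combination h
      rw [this, hnorm] at hcr
      linarith
    rw [conj_inv_term hr0 hcr hden]
    ring
  simp only [hptw] at key
  rw [integral_const_mul] at key
  refine mul_left_cancel₀ Complex.I_ne_zero (key.trans ?_)
  ring

lemma circle_cont {r : ℝ} (hr0 : 0 < r) {g : ℂ → ℂ}
    (hg : ContinuousOn g (closedBall 0 r)) :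
    Continuous fun θ : ℝ => g (circleMap 0 r θ) := by
  apply hg.comp_continuous (continuous_circleMap 0 r)
  intro θ
  simp [mem_closedBall_zero_iff, norm_circleMap_zero, abs_of_pos hr0]

lemma kern_cont {r : ℝ} (hr0 : 0 < r) (hr1 : r ≤ 1) {b : ℂ} (hb : ‖b‖ < 1) :
    Continuous fun θ : ℝ =>
      (starRingEnd ℂ) ((1 - circleMap 0 r θ * (starRingEnd ℂ) b)⁻¹) := by
  apply Complex.continuous_conj.comp
  apply Continuous.inv₀
  · exact (continuous_const.sub ((continuous_circleMap 0 r).mul continuous_const))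
  · intro θ
    intro h
    have h1 : ‖circleMap 0 r θ * (starRingEnd ℂ) b‖ = r * ‖b‖ := by
      rw [norm_mul, RCLike.norm_conj, norm_circleMap_zero, abs_of_pos hr0]
    have h2 : (1:ℝ) ≤ r * ‖b‖ := by
      rw [← h1]
      have := congrArg (‖·‖) (sub_eq_zero.mp h).symm
      simp only [norm_one] at this
      exact this.symm.le
    nlinarith [norm_nonneg b]

lemma sum_term {N : ℕ} {r : ℝ} (hr0 : 0 < r) (hr1 : r ≤ 1) {g : ℂ → ℂ}
    (hg : DiffContOnCl ℂ g (ball 0 r)) {z : Fin N → ℂ} (hz : ∀ j, ‖z j‖ < 1)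
    (d : Fin N → ℂ) :
    ∫ θ in (0:ℝ)..2 * Real.pi,
        g (circleMap 0 r θ) *
          (starRingEnd ℂ) (∑ j, d j * (1 - circleMap 0 r θ * (starRingEnd ℂ) (z j))⁻¹)
      = 2 * Real.pi * ∑ j, (starRingEnd ℂ) (d j) * g ((r : ℂ) ^ 2 * z j) := by
  have hgc : Continuous fun θ : ℝ => g (circleMap 0 r θ) :=
    circle_cont hr0 hg.continuousOn_ball
  have hptw : ∀ θ : ℝ,
      g (circleMap 0 r θ) *
          (starRingEnd ℂ) (∑ j, d j * (1 - circleMap 0 r θ * (starRingEnd ℂ) (z j))⁻¹)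
      = ∑ j, (starRingEnd ℂ) (d j) *
          (g (circleMap 0 r θ) *
            (starRingEnd ℂ) ((1 - circleMap 0 r θ * (starRingEnd ℂ) (z j))⁻¹)) := by
    intro θ
    rw [map_sum, Finset.mul_sum]
    congr 1; ext j
    rw [map_mul]
    ring
  simp only [hptw]
  rw [intervalIntegral.integral_finset_sum]
  · rw [Finset.mul_sum]
    congr 1; ext j
    rw [intervalIntegral.integral_const_mul, cauchy_term hr0 hr1 hg (hz j)]
    ring
  · intro j _
    exact (continuous_const.mul (hgc.mul (kern_cont hr0 hr1 (hz j)))).intervalIntegrable _ _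

lemma cs_int (G V : ℝ → ℝ) (hG : Continuous G) (hV : Continuous V) :
    (∫ θ in (0:ℝ)..2 * Real.pi, G θ * V θ) ^ 2
      ≤ (∫ θ in (0:ℝ)..2 * Real.pi, G θ ^ 2) * ∫ θ in (0:ℝ)..2 * Real.pi, V θ ^ 2 := by
  have hpi : (0:ℝ) ≤ 2 * Real.pi := by positivity
  set a := ∫ θ in (0:ℝ)..2 * Real.pi, G θ ^ 2 with ha
  set b := ∫ θ in (0:ℝ)..2 * Real.pi, G θ * V θ with hb
  set c := ∫ θ in (0:ℝ)..2 * Real.pi, V θ ^ 2 with hc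
  have key : ∀ t : ℝ, 0 ≤ c * (t * t) + (2 * b) * t + a := by
    intro t
    have hnn : 0 ≤ ∫ θ in (0:ℝ)..2 * Real.pi, (G θ + t * V θ) ^ 2 :=
      intervalIntegral.integral_nonneg hpi (fun θ _ => sq_nonneg _)
    have hexp : (∫ θ in (0:ℝ)..2 * Real.pi, (G θ + t * V θ) ^ 2)
        = c * (t * t) + (2 * b) * t + a := by
      have : ∀ θ, (G θ + t * V θ) ^ 2
          = (t * t) * V θ ^ 2 + (2 * t) * (G θ * V θ) + G θ ^ 2 := by intro θ; ring
      simp only [this]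
      rw [intervalIntegral.integral_add, intervalIntegral.integral_add,
        intervalIntegral.integral_const_mul, intervalIntegral.integral_const_mul]
      · ring
      · exact (continuous_const.mul (hV.pow 2)).intervalIntegrable _ _
      · exact (continuous_const.mul (hG.mul hV)).intervalIntegrable _ _
      · exact ((continuous_const.mul (hV.pow 2)).add
          (continuous_const.mul (hG.mul hV))).intervalIntegrable _ _
      · exact (hG.pow 2).intervalIntegrable _ _
    rw [← hexp]; exact hnn
  have hd := discrim_le_zero key
  rw [discrim] at hd
  nlinarith

lemma cs_complex (F W : ℝ → ℂ) (hF : Continuous F) (hW : Continuous W) :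
    ‖∫ θ in (0:ℝ)..2 * Real.pi, F θ * (starRingEnd ℂ) (W θ)‖ ^ 2
      ≤ (∫ θ in (0:ℝ)..2 * Real.pi, ‖F θ‖ ^ 2) * ∫ θ in (0:ℝ)..2 * Real.pi, ‖W θ‖ ^ 2 := by
  have hpi : (0:ℝ) ≤ 2 * Real.pi := by positivity
  have h1 : ‖∫ θ in (0:ℝ)..2 * Real.pi, F θ * (starRingEnd ℂ) (W θ)‖
      ≤ ∫ θ in (0:ℝ)..2 * Real.pi, ‖F θ‖ * ‖W θ‖ := by
    refine le_trans (intervalIntegral.norm_integral_le_integral_norm hpi) ?_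
    apply le_of_eq
    congr 1; ext θ
    rw [norm_mul, RCLike.norm_conj]
  have h2 : (∫ θ in (0:ℝ)..2 * Real.pi, ‖F θ‖ * ‖W θ‖) ^ 2
      ≤ (∫ θ in (0:ℝ)..2 * Real.pi, ‖F θ‖ ^ 2) * ∫ θ in (0:ℝ)..2 * Real.pi, ‖W θ‖ ^ 2 :=
    cs_int _ _ hF.norm hW.norm
  calc ‖∫ θ in (0:ℝ)..2 * Real.pi, F θ * (starRingEnd ℂ) (W θ)‖ ^ 2
      ≤ (∫ θ in (0:ℝ)..2 * Real.pi, ‖F θ‖ * ‖W θ‖) ^ 2 := by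
        apply pow_le_pow_left₀ (norm_nonneg _) h1
    _ ≤ _ := h2


-- differentiability of kernel combinations
lemma kern_ne {N : ℕ} {z : Fin N → ℂ} (hz : ∀ j, ‖z j‖ < 1) {ζ : ℂ} (hζ : ‖ζ‖ ≤ 1)
    (j : Fin N) : (1 : ℂ) - ζ * (starRingEnd ℂ) (z j) ≠ 0 := by
  intro h
  have h1 : ‖ζ * (starRingEnd ℂ) (z j)‖ < 1 := by
    rw [norm_mul, RCLike.norm_conj]
    nlinarith [norm_nonneg ζ, norm_nonneg (z j), hz j]
  have h2 : (1:ℂ) = ζ * (starRingEnd ℂ) (z j) := by linear_combination h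
  rw [← h2] at h1; simp at h1

lemma kern_diff {N : ℕ} {z : Fin N → ℂ} (hz : ∀ j, ‖z j‖ < 1) (d : Fin N → ℂ)
    {ζ : ℂ} (hζ : ‖ζ‖ ≤ 1) :
    DifferentiableAt ℂ (fun ξ : ℂ => ∑ j, d j * (1 - ξ * (starRingEnd ℂ) (z j))⁻¹) ζ := by
  apply DifferentiableAt.fun_sum
  intro j _
  apply (differentiableAt_const _).mul
  apply DifferentiableAt.inv
  · exact (differentiableAt_const _).sub (differentiableAt_id.mul (differentiableAt_const _))
  · exact kern_ne hz hζ j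

lemma pick_disk {N : ℕ} (z w : Fin N → ℂ) (hz : ∀ j, ‖z j‖ < 1)
    (f : ℂ → ℂ) (hf : DifferentiableOn ℂ f (ball 0 1))
    (hfb : ∀ ζ : ℂ, ‖ζ‖ < 1 → ‖f ζ‖ ≤ 1)
    (hfz : ∀ j, f (z j) = w j) (y : Fin N → ℂ) :
    0 ≤ ∑ j, (starRingEnd ℂ) (y j) *
        ∑ k, y k * ((1 - w j * (starRingEnd ℂ) (w k)) *
          (1 - z j * (starRingEnd ℂ) (z k))⁻¹) := by
  classical
  set hfun : ℂ → ℂ := fun ξ => ∑ j, (y j * (starRingEnd ℂ) (w j)) *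
      (1 - ξ * (starRingEnd ℂ) (z j))⁻¹ with hhfun
  set vfun : ℂ → ℂ := fun ξ => ∑ j, y j * (1 - ξ * (starRingEnd ℂ) (z j))⁻¹ with hvfun
  set fh : ℂ → ℂ := fun ζ => f ζ * hfun ζ with hfh
  set SA : ℝ → ℂ := fun r => ∑ k, (starRingEnd ℂ) (y k) * (w k * hfun ((r:ℂ)^2 * z k))
    with hSA
  set SV : ℝ → ℂ := fun r => ∑ k, (starRingEnd ℂ) (y k) * vfun ((r:ℂ)^2 * z k) with hSV
  set SE : ℝ → ℂ := fun r => ∑ k, (starRingEnd ℂ) (y k) * fh ((r:ℂ)^2 * z k) with hSE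
  -- fixed r facts
  have fixedr : ∀ r : ℝ, r ∈ Set.Ioo (0:ℝ) 1 →
      ((SA r).im = 0 ∧ 0 ≤ (SA r).re) ∧ ((SV r).im = 0 ∧ 0 ≤ (SV r).re) ∧
      ‖SE r‖ ^ 2 ≤ (SA r).re * (SV r).re := by
    rintro r ⟨hr0, hr1⟩
    have hr1' : r ≤ 1 := hr1.le
    have h2π : (0:ℝ) < 2 * Real.pi := by positivity
    have h2πc : ((2 * Real.pi : ℝ) : ℂ) ≠ 0 := by
      simp only [ne_eq, Complex.ofReal_eq_zero]; exact h2π.ne'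
    have hdiffh : DiffContOnCl ℂ hfun (ball 0 r) := by
      apply DifferentiableOn.diffContOnCl
      rw [closure_ball (0:ℂ) hr0.ne']
      intro ζ hζ
      exact (kern_diff hz _ ((mem_closedBall_zero_iff.mp hζ).trans hr1')).differentiableWithinAt
    have hdiffv : DiffContOnCl ℂ vfun (ball 0 r) := by
      apply DifferentiableOn.diffContOnCl
      rw [closure_ball (0:ℂ) hr0.ne']
      intro ζ hζ
      exact (kern_diff hz _ ((mem_closedBall_zero_iff.mp hζ).trans hr1')).differentiableWithinAt
    have hdifffh : DiffContOnCl ℂ fh (ball 0 r) := by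
      rw [hfh]
      apply DifferentiableOn.diffContOnCl
      rw [closure_ball (0:ℂ) hr0.ne']
      intro ζ hζ
      have h1 : ‖ζ‖ ≤ r := mem_closedBall_zero_iff.mp hζ
      refine (DifferentiableAt.mul ?_ (kern_diff hz _ (h1.trans hr1'))).differentiableWithinAt
      exact hf.differentiableAt (isOpen_ball.mem_nhds (mem_ball_zero_iff.mpr (lt_of_le_of_lt h1 hr1)))
    have hContH : Continuous fun θ : ℝ => hfun (circleMap 0 r θ) :=
      circle_cont hr0 hdiffh.continuousOn_ball
    have hContV : Continuous fun θ : ℝ => vfun (circleMap 0 r θ) :=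
      circle_cont hr0 hdiffv.continuousOn_ball
    have hContFH : Continuous fun θ : ℝ => fh (circleMap 0 r θ) :=
      circle_cont hr0 hdifffh.continuousOn_ball
    have EA := sum_term hr0 hr1' hdiffh hz (fun j => y j * (starRingEnd ℂ) (w j))
    have EV := sum_term hr0 hr1' hdiffv hz y
    have EE := sum_term hr0 hr1' hdifffh hz y
    have hEA2 : ((2 * Real.pi : ℝ) : ℂ) * SA r
        = ((∫ θ in (0:ℝ)..2 * Real.pi, ‖hfun (circleMap 0 r θ)‖ ^ 2 : ℝ) : ℂ) := by
      rw [show (∫ θ in (0:ℝ)..2 * Real.pi, ‖hfun (circleMap 0 r θ)‖ ^ 2 : ℝ)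
          = ∫ θ in (0:ℝ)..2 * Real.pi, Complex.normSq (hfun (circleMap 0 r θ)) from by
        congr 1; ext θ; rw [Complex.normSq_eq_norm_sq]]
      rw [← integral_complex_ofReal_ii]
      rw [show (∫ θ in (0:ℝ)..2 * Real.pi,
            ((Complex.normSq (hfun (circleMap 0 r θ)) : ℝ) : ℂ))
          = ∫ θ in (0:ℝ)..2 * Real.pi, hfun (circleMap 0 r θ) *
              (starRingEnd ℂ) (hfun (circleMap 0 r θ)) from by
        congr 1; ext θ; rw [Complex.mul_conj]]
      rw [EA]
      push_cast
      congr 1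
      rw [hSA]
      refine Finset.sum_congr rfl fun k _ => ?_
      rw [map_mul, Complex.conj_conj]
      ring
    have hEV2 : ((2 * Real.pi : ℝ) : ℂ) * SV r
        = ((∫ θ in (0:ℝ)..2 * Real.pi, ‖vfun (circleMap 0 r θ)‖ ^ 2 : ℝ) : ℂ) := by
      rw [show (∫ θ in (0:ℝ)..2 * Real.pi, ‖vfun (circleMap 0 r θ)‖ ^ 2 : ℝ)
          = ∫ θ in (0:ℝ)..2 * Real.pi, Complex.normSq (vfun (circleMap 0 r θ)) from by
        congr 1; ext θ; rw [Complex.normSq_eq_norm_sq]]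
      rw [← integral_complex_ofReal_ii]
      rw [show (∫ θ in (0:ℝ)..2 * Real.pi,
            ((Complex.normSq (vfun (circleMap 0 r θ)) : ℝ) : ℂ))
          = ∫ θ in (0:ℝ)..2 * Real.pi, vfun (circleMap 0 r θ) *
              (starRingEnd ℂ) (vfun (circleMap 0 r θ)) from by
        congr 1; ext θ; rw [Complex.mul_conj]]
      rw [EV]
      push_cast
      rw [hSV]
    have hRA : 0 ≤ ∫ θ in (0:ℝ)..2 * Real.pi, ‖hfun (circleMap 0 r θ)‖ ^ 2 :=
      intervalIntegral.integral_nonneg h2π.le fun θ _ => sq_nonneg _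
    have hRV : 0 ≤ ∫ θ in (0:ℝ)..2 * Real.pi, ‖vfun (circleMap 0 r θ)‖ ^ 2 :=
      intervalIntegral.integral_nonneg h2π.le fun θ _ => sq_nonneg _
    have hSAr : SA r = (((∫ θ in (0:ℝ)..2 * Real.pi, ‖hfun (circleMap 0 r θ)‖ ^ 2)
        / (2 * Real.pi) : ℝ) : ℂ) := by
      rw [Complex.ofReal_div, eq_div_iff h2πc, mul_comm]
      exact hEA2
    have hSVr : SV r = (((∫ θ in (0:ℝ)..2 * Real.pi, ‖vfun (circleMap 0 r θ)‖ ^ 2)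
        / (2 * Real.pi) : ℝ) : ℂ) := by
      rw [Complex.ofReal_div, eq_div_iff h2πc, mul_comm]
      exact hEV2
    refine ⟨⟨?_, ?_⟩, ⟨?_, ?_⟩, ?_⟩
    · rw [hSAr]; exact Complex.ofReal_im _
    · rw [hSAr, Complex.ofReal_re]; exact div_nonneg hRA h2π.le
    · rw [hSVr]; exact Complex.ofReal_im _
    · rw [hSVr, Complex.ofReal_re]; exact div_nonneg hRV h2π.le
    · have hcs := cs_complex (fun θ => fh (circleMap 0 r θ))
        (fun θ => vfun (circleMap 0 r θ)) hContFH hContV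
      simp only [hvfun] at hcs
      rw [EE] at hcs
      rw [show (∑ j, (starRingEnd ℂ) (y j) * fh ((r:ℂ)^2 * z j)) = SE r from rfl] at hcs
      have hmono : (∫ θ in (0:ℝ)..2 * Real.pi, ‖fh (circleMap 0 r θ)‖ ^ 2)
          ≤ ∫ θ in (0:ℝ)..2 * Real.pi, ‖hfun (circleMap 0 r θ)‖ ^ 2 := by
        apply intervalIntegral.integral_mono_on h2π.le
          ((hContFH.norm.pow 2).intervalIntegrable _ _)
          ((hContH.norm.pow 2).intervalIntegrable _ _)
        intro θ _
        have hball : ‖circleMap 0 r θ‖ < 1 := by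
          rw [norm_circleMap_zero, abs_of_pos hr0]; exact hr1
        have hb := hfb _ hball
        rw [hfh]
        simp only [Pi.pow_apply]
        rw [norm_mul, mul_pow]
        exact mul_le_of_le_one_left (sq_nonneg _) (pow_le_one₀ (norm_nonneg _) hb)
      have e1 : (2 * Real.pi) * (SA r).re
          = ∫ θ in (0:ℝ)..2 * Real.pi, ‖hfun (circleMap 0 r θ)‖ ^ 2 := by
        rw [hSAr, Complex.ofReal_re]; field_simp
      have e2 : (2 * Real.pi) * (SV r).re
          = ∫ θ in (0:ℝ)..2 * Real.pi, ‖vfun (circleMap 0 r θ)‖ ^ 2 := by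
        rw [hSVr, Complex.ofReal_re]; field_simp
      have hn : ‖(2:ℂ) * (Real.pi:ℂ) * SE r‖ = 2 * Real.pi * ‖SE r‖ := by
        rw [norm_mul, norm_mul]
        simp [Real.pi_nonneg, abs_of_nonneg]
      rw [hn] at hcs
      have h4 : (2 * Real.pi * ‖SE r‖) ^ 2
          ≤ ((2 * Real.pi) * (SA r).re) * ((2 * Real.pi) * (SV r).re) := by
        rw [e1, e2]
        calc (2 * Real.pi * ‖SE r‖) ^ 2
            ≤ (∫ θ in (0:ℝ)..2 * Real.pi, ‖fh (circleMap 0 r θ)‖ ^ 2) *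
              ∫ θ in (0:ℝ)..2 * Real.pi, ‖vfun (circleMap 0 r θ)‖ ^ 2 := hcs
          _ ≤ _ := by
              apply mul_le_mul_of_nonneg_right hmono hRV
      have h5 : (2 * Real.pi) ^ 2 * ‖SE r‖ ^ 2
          ≤ (2 * Real.pi) ^ 2 * ((SA r).re * (SV r).re) := by nlinarith [h4]
      exact le_of_mul_le_mul_left h5 (by positivity)
  -- limits
  set L := nhdsWithin (1:ℝ) (Set.Iio 1) with hL
  set Ainf : ℂ := ∑ k, (starRingEnd ℂ) (y k) * (w k * hfun (z k)) with hAinf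
  set Vinf : ℂ := ∑ k, (starRingEnd ℂ) (y k) * vfun (z k) with hVinf
  have hIoo : Set.Ioo (0:ℝ) 1 ∈ L := Ioo_mem_nhdsLT_of_mem (by norm_num)
  have hev := Filter.eventually_of_mem hIoo fixedr
  have htendpt : ∀ k : Fin N, Filter.Tendsto (fun r : ℝ => ((r:ℂ))^2 * z k)
      L (nhds (z k)) := by
    intro k
    have hc : Continuous fun r : ℝ => ((r:ℂ))^2 * z k :=
      (Complex.continuous_ofReal.pow 2).mul continuous_const
    have h1 := hc.tendsto 1
    simp only [Complex.ofReal_one, one_pow, one_mul] at h1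
    exact h1.mono_left nhdsWithin_le_nhds
  have hdiffH : ∀ k : Fin N, DifferentiableAt ℂ hfun (z k) := by
    intro k; rw [hhfun]; exact kern_diff hz _ (hz k).le
  have hdiffV : ∀ k : Fin N, DifferentiableAt ℂ vfun (z k) := by
    intro k; rw [hvfun]; exact kern_diff hz _ (hz k).le
  have hdiffFH : ∀ k : Fin N, DifferentiableAt ℂ fh (z k) := by
    intro k; rw [hfh]
    exact (hf.differentiableAt (isOpen_ball.mem_nhds
      (mem_ball_zero_iff.mpr (hz k)))).mul (by rw [hhfun] at hdiffH ⊢; exact hdiffH k)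
  have hTA : Filter.Tendsto SA L (nhds Ainf) := by
    rw [hSA, hAinf]
    apply tendsto_finset_sum
    intro k _
    exact (((hdiffH k).continuousAt.tendsto.comp (htendpt k)).const_mul
      (w k)).const_mul ((starRingEnd ℂ) (y k))
  have hTV : Filter.Tendsto SV L (nhds Vinf) := by
    rw [hSV, hVinf]
    apply tendsto_finset_sum
    intro k _
    exact ((hdiffV k).continuousAt.tendsto.comp (htendpt k)).const_mul ((starRingEnd ℂ) (y k))
  have hTE : Filter.Tendsto SE L (nhds Ainf) := by
    have h1 : Filter.Tendsto SE L (nhds (∑ k, (starRingEnd ℂ) (y k) * fh (z k))) := by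
      rw [hSE]
      apply tendsto_finset_sum
      intro k _
      exact ((hdiffFH k).continuousAt.tendsto.comp (htendpt k)).const_mul ((starRingEnd ℂ) (y k))
    have h2 : (∑ k, (starRingEnd ℂ) (y k) * fh (z k)) = Ainf := by
      rw [hAinf]
      refine Finset.sum_congr rfl fun k _ => ?_
      rw [hfh]
      simp only [hfz k]
    rwa [h2] at h1
  have hAim : Ainf.im = 0 := by
    have h1 : Filter.Tendsto (fun r => (SA r).im) L (nhds Ainf.im) := (Complex.continuous_im.tendsto Ainf).comp hTA
    have h2 : (fun r => (SA r).im) =ᶠ[L] (fun _ => (0:ℝ)) := hev.mono fun r hr => hr.1.1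
    exact tendsto_nhds_unique (h1.congr' h2) tendsto_const_nhds
  have hVim : Vinf.im = 0 := by
    have h1 : Filter.Tendsto (fun r => (SV r).im) L (nhds Vinf.im) := (Complex.continuous_im.tendsto Vinf).comp hTV
    have h2 : (fun r => (SV r).im) =ᶠ[L] (fun _ => (0:ℝ)) := hev.mono fun r hr => hr.2.1.1
    exact tendsto_nhds_unique (h1.congr' h2) tendsto_const_nhds
  have hAre : 0 ≤ Ainf.re := ge_of_tendsto ((Complex.continuous_re.tendsto Ainf).comp hTA) (hev.mono fun r hr => hr.1.2)
  have hVre : 0 ≤ Vinf.re := ge_of_tendsto ((Complex.continuous_re.tendsto Vinf).comp hTV) (hev.mono fun r hr => hr.2.1.2)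
  have hMain : ‖Ainf‖ ^ 2 ≤ Ainf.re * Vinf.re := by
    refine le_of_tendsto_of_tendsto ((hTE.norm).pow 2) (((Complex.continuous_re.tendsto Ainf).comp hTA).mul ((Complex.continuous_re.tendsto Vinf).comp hTV))
      (hev.mono fun r hr => hr.2.2)
  have hnorm : ‖Ainf‖ ^ 2 = Ainf.re ^ 2 := by
    rw [Complex.sq_norm, Complex.normSq_apply, hAim]
    ring
  have hfinal : Ainf.re ≤ Vinf.re := by
    rcases eq_or_lt_of_le hAre with h | h
    · linarith
    · nlinarith [hMain, hnorm]
  have hS : (∑ j, (starRingEnd ℂ) (y j) *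
        ∑ k, y k * ((1 - w j * (starRingEnd ℂ) (w k)) *
          (1 - z j * (starRingEnd ℂ) (z k))⁻¹)) = Vinf - Ainf := by
    rw [eq_sub_iff_add_eq]
    rw [hVinf, hAinf]
    rw [← Finset.sum_add_distrib]
    refine Finset.sum_congr rfl fun a _ => ?_
    have hva : vfun (z a) = ∑ k, y k * (1 - z a * (starRingEnd ℂ) (z k))⁻¹ := by rw [hvfun]
    have hha : hfun (z a) = ∑ k, y k * (starRingEnd ℂ) (w k) *
        (1 - z a * (starRingEnd ℂ) (z k))⁻¹ := by rw [hhfun]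
    rw [hva, hha]
    rw [Finset.mul_sum, Finset.mul_sum, Finset.mul_sum, Finset.mul_sum]
    rw [← Finset.sum_add_distrib]
    refine Finset.sum_congr rfl fun b _ => ?_
    ring
  rw [hS]
  rw [Complex.le_def]
  constructor
  · simp only [Complex.sub_re, Complex.zero_re]
    linarith
  · simp only [Complex.sub_im, Complex.zero_im, hAim, hVim]
    ring


open scoped ComplexOrder in
theorem stmt_16 (N : ℕ) (v w : Fin N → ℂ) (hv : ∀ j, 0 < (v j).re)
    (T : ℂ → ℂ) (hT : AnalyticOn ℂ T {s : ℂ | 0 < s.re})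
    (hTb : ∀ s : ℂ, 0 < s.re → ‖T s‖ < 1)
    (hint : ∀ j, T (v j) = w j) :
    Matrix.PosSemidef (Matrix.of fun j k : Fin N =>
      (1 - w j * (starRingEnd ℂ) (w k)) / (v j + (starRingEnd ℂ) (v k))) := by
  have hv1 : ∀ j, v j + 1 ≠ 0 := by
    intro j h
    have := congrArg Complex.re h
    simp only [Complex.add_re, Complex.one_re, Complex.zero_re] at this
    linarith [hv j]
  have hv1c : ∀ k, (starRingEnd ℂ) (v k) + 1 ≠ 0 := by
    intro k h
    have := congrArg Complex.re h
    simp only [Complex.add_re, Complex.conj_re, Complex.one_re, Complex.zero_re] at this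
    linarith [hv k]
  have hsum : ∀ j k, v j + (starRingEnd ℂ) (v k) ≠ 0 := by
    intro j k h
    have := congrArg Complex.re h
    simp only [Complex.add_re, Complex.conj_re, Complex.zero_re] at this
    linarith [hv j, hv k]
  set z : Fin N → ℂ := fun j => (v j - 1) / (v j + 1) with hzdef
  have hz : ∀ j, ‖z j‖ < 1 := by
    intro j
    rw [hzdef]
    simp only []
    rw [norm_div, div_lt_one (norm_pos_iff.mpr (hv1 j))]
    apply lt_of_pow_lt_pow_left₀ 2 (norm_nonneg _)
    rw [Complex.sq_norm, Complex.sq_norm,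
      Complex.normSq_apply, Complex.normSq_apply]
    simp only [Complex.sub_re, Complex.sub_im, Complex.add_re, Complex.add_im,
      Complex.one_re, Complex.one_im]
    nlinarith [hv j]
  set f : ℂ → ℂ := fun ζ => T ((1 + ζ) / (1 - ζ)) with hfdef
  have hone : ∀ ζ : ℂ, ‖ζ‖ < 1 → (1:ℂ) - ζ ≠ 0 := by
    intro ζ h h0
    have : ζ = 1 := by linear_combination -h0
    rw [this] at h
    simp at h
  have hmap : ∀ ζ : ℂ, ‖ζ‖ < 1 → 0 < ((1 + ζ) / (1 - ζ)).re := by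
    intro ζ h
    have hn : Complex.normSq ζ < 1 := by
      rw [← Complex.sq_norm]
      nlinarith [norm_nonneg ζ]
    rw [Complex.normSq_apply] at hn
    rw [Complex.div_re]
    have hden : 0 < Complex.normSq (1 - ζ) :=
      Complex.normSq_pos.mpr (hone ζ h)
    rw [← add_div]
    apply div_pos ?_ hden
    simp only [Complex.add_re, Complex.add_im, Complex.sub_re, Complex.sub_im,
      Complex.one_re, Complex.one_im]
    nlinarith
  have hTopen : IsOpen {s : ℂ | 0 < s.re} := isOpen_lt continuous_const Complex.continuous_re
  have hT' : AnalyticOnNhd ℂ T {s : ℂ | 0 < s.re} :=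
    (hTopen.analyticOn_iff_analyticOnNhd).mp hT
  have hf : DifferentiableOn ℂ f (ball 0 1) := by
    intro ζ hζ
    rw [mem_ball_zero_iff] at hζ
    rw [hfdef]
    apply DifferentiableAt.differentiableWithinAt
    apply DifferentiableAt.comp
    · exact (hT' _ (hmap ζ hζ)).differentiableAt
    · exact ((differentiableAt_const _).add differentiableAt_id).div
        ((differentiableAt_const _).sub differentiableAt_id) (hone ζ hζ)
  have hfb : ∀ ζ : ℂ, ‖ζ‖ < 1 → ‖f ζ‖ ≤ 1 := by
    intro ζ h
    rw [hfdef]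
    exact (hTb _ (hmap ζ h)).le
  have hfz : ∀ j, f (z j) = w j := by
    intro j
    have h1 := hv1 j
    have e1 : (1:ℂ) + (v j - 1) / (v j + 1) = 2 * v j / (v j + 1) := by
      field_simp; ring
    have e2 : (1:ℂ) - (v j - 1) / (v j + 1) = 2 / (v j + 1) := by
      field_simp; norm_num
    show T ((1 + (v j - 1) / (v j + 1)) / (1 - (v j - 1) / (v j + 1))) = w j
    rw [e1, e2]
    rw [show (2 * v j / (v j + 1)) / ((2:ℂ) / (v j + 1)) = v j from by
      rw [div_div_div_comm]
      rw [div_self (hv1 j), div_one, mul_comm, mul_div_assoc]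
      norm_num]
    exact hint j
  have hkern : ∀ j k, (1 : ℂ) - z j * (starRingEnd ℂ) (z k)
      = 2 * (v j + (starRingEnd ℂ) (v k)) / ((v j + 1) * ((starRingEnd ℂ) (v k) + 1)) := by
    intro j k
    rw [hzdef]
    simp only [map_div₀, map_sub, map_one, map_add]
    have ha := hv1 j
    have hb := hv1c k
    field_simp
    ring
  rw [Matrix.posSemidef_iff_dotProduct_mulVec]
  constructor
  · ext i j
    simp only [Matrix.conjTranspose_apply, Matrix.of_apply, map_div₀, map_sub, map_one,
      map_mul, map_add, Complex.conj_conj, RCLike.star_def]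
    ring
  · intro x
    set y : Fin N → ℂ := fun j => x j / ((starRingEnd ℂ) (v j) + 1) with hydef
    have key := pick_disk z w hz f hf hfb hfz y
    set S : ℂ := ∑ j, (starRingEnd ℂ) (y j) *
        ∑ k, y k * ((1 - w j * (starRingEnd ℂ) (w k)) *
          (1 - z j * (starRingEnd ℂ) (z k))⁻¹) with hSdef
    have hform : dotProduct (star x) ((Matrix.of fun j k : Fin N =>
        (1 - w j * (starRingEnd ℂ) (w k)) / (v j + (starRingEnd ℂ) (v k))).mulVec x)
        = 2 * S := by
      rw [hSdef]
      simp only [dotProduct, Matrix.mulVec, Pi.star_apply, RCLike.star_def,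
        Matrix.of_apply]
      simp only [Finset.mul_sum]
      refine Finset.sum_congr rfl fun j _ => ?_
      refine Finset.sum_congr rfl fun k _ => ?_
      rw [hkern j k, hydef]
      simp only [map_div₀, map_add, map_one, Complex.conj_conj]
      have ha := hv1 j
      have hb := hv1c k
      have hc := hsum j k
      rw [inv_div]
      field_simp
    rw [hform]
    rw [Complex.le_def] at key ⊢
    obtain ⟨hre, him⟩ := key
    simp only [Complex.zero_re, Complex.zero_im] at hre him
    constructor
    · simp only [Complex.zero_re, Complex.mul_re, Complex.re_ofNat, Complex.im_ofNat,
        zero_mul, sub_zero]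
      linarith
    · simp only [Complex.zero_im, Complex.mul_im, Complex.re_ofNat, Complex.im_ofNat,
        zero_mul, add_zero]
      rw [← him]
      ring
end
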